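/- arXiv:1702.04397 — 2 statements merged into one kernel-verified Lean document; each statement's English description precedes it below -/
import Mathlib

section
/- Let V be a graded vector space over a field of characteristic zero, φ : V → V⊗V a linear map whose image is contained in the degree-2 Lie polynomials 𝕃²(V) ⊂ V⊗V, ψ : V → W a homogeneous linear map, and for each planar rooted binary tree T with k leaves define P_T : V → W^{⊗k} recursively by P_| = ψ and P_{T'∨T''} = (P_{T'} ⊗ P_{T''}) ∘ φ, and Q_T : W^{⊗k} → 𝕃^k(W) the nested commutator bracketing along T. Then for each planar rooted binary tree T with k ≥ 2 leaves, (1/|Aut T|)·Q_T ∘ P_T = Σ_{S ∈ T̄} P_S, where T̄ is the set of planar embeddings of trees isomorphic to T as non-planar rooted trees and Aut T is the automorphism group of T as a non-planar rooted tree. -/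
open TensorProduct CategoryTheory MonoidalCategory

namespace Stmt1

/-- Planar rooted binary trees. -/
inductive PBT : Type
  | leaf : PBT
  | node : PBT → PBT → PBT

/-- The vertices of a planar rooted binary tree. -/
inductive Vtx : PBT → Type
  | root : (T : PBT) → Vtx T
  | left : {a b : PBT} → Vtx a → Vtx (.node a b)
  | right : {a b : PBT} → Vtx b → Vtx (.node a b)

/-- The parent of a vertex (none for the root). -/
def parent : {T : PBT} → Vtx T → Option (Vtx T)
  | _, .root _ => none
  | .node a b, .left v =>
      match parent v with
      | none => some (.root (.node a b))
      | some w => some (.left w)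
  | .node a b, .right v =>
      match parent v with
      | none => some (.root (.node a b))
      | some w => some (.right w)

/-- Automorphisms of T as a rooted non-planar tree. -/
def Aut (T : PBT) : Type :=
  { e : Vtx T ≃ Vtx T // ∀ v, parent (e v) = Option.map e (parent v) }

/-- Isomorphism of rooted non-planar trees; {S | Iso S T} is the set T̄ of all
planar embeddings of trees isomorphic to T as non-planar trees. -/
def Iso (T T' : PBT) : Prop :=
  Nonempty { e : Vtx T ≃ Vtx T' // ∀ v, parent (e v) = Option.map e (parent v) }

variable (K V W : Type) [Field K] [CharZero K]
  [AddCommGroup V] [Module K V] [AddCommGroup W] [Module K W]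

/-- The tree-shaped tensor power of W associated to a tree T (its flattening is
W^{⊗k}, k the number of leaves of T). -/
noncomputable def Sh : PBT → ModuleCat K
  | .leaf => ModuleCat.of K W
  | .node a b => Sh a ⊗ Sh b

variable (φ : V →ₗ[K] V ⊗[K] V) (ψ : V →ₗ[K] W)

/-- P_T : V → W^{⊗k}, P_| = ψ, P_{T'∨T''} = (P_{T'} ⊗ P_{T''}) ∘ φ. -/
noncomputable def Pm : (t : PBT) → (ModuleCat.of K V ⟶ Sh K W t)
  | .leaf => ModuleCat.ofHom ψ
  | .node a b =>
      ModuleCat.ofHom (φ : V →ₗ[K] V ⊗[K] V) ≫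
        ((Pm a : ModuleCat.of K V ⟶ Sh K W a) ⊗ₘ (Pm b : ModuleCat.of K V ⟶ Sh K W b))

/-- The commutator bracket of the tensor algebra: [a,b] = a⊗b - b⊗a. -/
noncomputable def brkt : TensorAlgebra K W ⊗[K] TensorAlgebra K W →ₗ[K] TensorAlgebra K W :=
  (LinearMap.mul' K (TensorAlgebra K W)) ∘ₗ
    (LinearMap.id - (TensorProduct.comm K (TensorAlgebra K W) (TensorAlgebra K W)).toLinearMap)

/-- Q_T : W^{⊗k} → 𝕃^k(W) ⊂ T(W), the nested commutator bracketing along T. -/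
noncomputable def Qm : (t : PBT) → (Sh K W t ⟶ ModuleCat.of K (TensorAlgebra K W))
  | .leaf => ModuleCat.ofHom (TensorAlgebra.ι K (M := W))
  | .node a b => (Qm a ⊗ₘ Qm b) ≫ ModuleCat.ofHom (brkt K W)

/-- The canonical inclusion W^{⊗k} → T(W) flattening a tree-shaped tensor power
into the tensor algebra. -/
noncomputable def flat : (t : PBT) → (Sh K W t ⟶ ModuleCat.of K (TensorAlgebra K W))
  | .leaf => ModuleCat.ofHom (TensorAlgebra.ι K (M := W))
  | .node a b =>
      (flat a ⊗ₘ flat b) ≫ ModuleCat.ofHom (LinearMap.mul' K (TensorAlgebra K W))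

lemma parent_root {T : PBT} : parent (.root T) = none := by cases T <;> rfl

lemma parent_left_none {a b : PBT} {w : Vtx a} (h : parent w = none) :
    parent (Vtx.left w : Vtx (.node a b)) = some (.root _) := by
  simp [parent, h]

lemma parent_left_some {a b : PBT} {w u : Vtx a} (h : parent w = some u) :
    parent (Vtx.left w : Vtx (.node a b)) = some (.left u) := by
  simp [parent, h]

lemma parent_right_none {a b : PBT} {w : Vtx b} (h : parent w = none) :
    parent (Vtx.right w : Vtx (.node a b)) = some (.root _) := by
  simp [parent, h]

lemma parent_right_some {a b : PBT} {w u : Vtx b} (h : parent w = some u) :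
    parent (Vtx.right w : Vtx (.node a b)) = some (.right u) := by
  simp [parent, h]

lemma parent_eq_none {T : PBT} {v : Vtx T} : parent v = none ↔ v = .root T := by
  constructor
  · intro h
    cases v with
    | root => rfl
    | left w =>
      rcases hw : parent w with _ | u
      · rw [parent_left_none hw] at h; exact absurd h (by simp)
      · rw [parent_left_some hw] at h; exact absurd h (by simp)
    | right w =>
      rcases hw : parent w with _ | u
      · rw [parent_right_none hw] at h; exact absurd h (by simp)
      · rw [parent_right_some hw] at h; exact absurd h (by simp)
  · rintro rfl; exact parent_root

lemma exists_parent {T : PBT} {v : Vtx T} (h : v ≠ .root T) : ∃ u, parent v = some u := by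
  rcases hp : parent v with _ | u
  · exact absurd (parent_eq_none.mp hp) h
  · exact ⟨u, rfl⟩

-- inversion lemmas
lemma parent_inv_left {a b : PBT} {x : Vtx (.node a b)} {u : Vtx a}
    (h : parent x = some (Vtx.left u)) : ∃ w, x = Vtx.left w ∧ parent w = some u := by
  cases x with
  | root => rw [parent_root] at h; exact absurd h (by simp)
  | left w =>
    rcases hw : parent w with _ | p
    · rw [parent_left_none hw] at h; exact absurd h (by simp)
    · rw [parent_left_some hw] at h
      obtain rfl : p = u := by injection h with h'; injection h'
      exact ⟨w, rfl, hw⟩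
  | right w =>
    rcases hw : parent w with _ | p
    · rw [parent_right_none hw] at h; exact absurd h (by simp)
    · rw [parent_right_some hw] at h; exact absurd h (by simp)

lemma parent_inv_right {a b : PBT} {x : Vtx (.node a b)} {u : Vtx b}
    (h : parent x = some (Vtx.right u)) : ∃ w, x = Vtx.right w ∧ parent w = some u := by
  cases x with
  | root => rw [parent_root] at h; exact absurd h (by simp)
  | right w =>
    rcases hw : parent w with _ | p
    · rw [parent_right_none hw] at h; exact absurd h (by simp)
    · rw [parent_right_some hw] at h
      obtain rfl : p = u := by injection h with h'; injection h'
      exact ⟨w, rfl, hw⟩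
  | left w =>
    rcases hw : parent w with _ | p
    · rw [parent_left_none hw] at h; exact absurd h (by simp)
    · rw [parent_left_some hw] at h; exact absurd h (by simp)

lemma parent_inv_root {a b : PBT} {x : Vtx (.node a b)}
    (h : parent x = some (.root _)) :
    x = Vtx.left (.root a) ∨ x = Vtx.right (.root b) := by
  cases x with
  | root => rw [parent_root] at h; exact absurd h (by simp)
  | left w =>
    rcases hw : parent w with _ | p
    · exact Or.inl (by rw [parent_eq_none.mp hw])
    · rw [parent_left_some hw] at h; exact absurd h (by simp)
  | right w =>
    rcases hw : parent w with _ | p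
    · exact Or.inr (by rw [parent_eq_none.mp hw])
    · rw [parent_right_some hw] at h; exact absurd h (by simp)

def depth : {T : PBT} → Vtx T → ℕ
  | _, .root _ => 0
  | _, .left v => depth v + 1
  | _, .right v => depth v + 1

lemma depth_parent : ∀ {T : PBT} (v : Vtx T) (u : Vtx T), parent v = some u →
    depth v = depth u + 1 := by
  intro T v
  induction v with
  | root => intro u h; rw [parent_root] at h; exact absurd h (by simp)
  | left w ih =>
    intro u h
    rcases hw : parent w with _ | p
    · rw [parent_left_none hw] at h
      obtain rfl : u = Vtx.root _ := by injection h with h'; exact h'.symm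
      have : w = .root _ := parent_eq_none.mp hw
      subst this
      rfl
    · rw [parent_left_some hw] at h
      obtain rfl : u = Vtx.left p := by injection h with h'; exact h'.symm
      have := ih p hw
      simp [depth, this]
  | right w ih =>
    intro u h
    rcases hw : parent w with _ | p
    · rw [parent_right_none hw] at h
      obtain rfl : u = Vtx.root _ := by injection h with h'; exact h'.symm
      have : w = .root _ := parent_eq_none.mp hw
      subst this
      rfl
    · rw [parent_right_some hw] at h
      obtain rfl : u = Vtx.right p := by injection h with h'; exact h'.symm
      have := ih p hw
      simp [depth, this]

/-- bundled tree isomorphisms -/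
def IsoT (a b : PBT) : Type :=
  { e : Vtx a ≃ Vtx b // ∀ v, parent (e v) = Option.map e (parent v) }

def IsoT.refl (a : PBT) : IsoT a a :=
  ⟨Equiv.refl _, fun v => by simp⟩

def IsoT.symm {a b : PBT} (e : IsoT a b) : IsoT b a :=
  ⟨e.1.symm, fun v => by
    have h := e.2 (e.1.symm v)
    rw [Equiv.apply_symm_apply] at h
    rw [h, Option.map_map]
    simp⟩

def IsoT.trans {a b c : PBT} (e : IsoT a b) (f : IsoT b c) : IsoT a c :=
  ⟨e.1.trans f.1, fun v => by
    simp only [Equiv.trans_apply, f.2, e.2, Option.map_map]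
    rfl⟩

lemma root_fix {a b : PBT} (e : IsoT a b) : e.1 (.root a) = .root b := by
  apply parent_eq_none.mp
  rw [e.2, parent_root, Option.map_none]

/-- swap of the two subtrees at the root -/
def topSwap (a b : PBT) : IsoT (.node a b) (.node b a) :=
  ⟨{ toFun := fun v => match v with
      | .root _ => .root _
      | .left w => .right w
      | .right w => .left w
     invFun := fun v => match v with
      | .root _ => .root _
      | .left w => .right w
      | .right w => .left w
     left_inv := by rintro (_ | w | w) <;> rfl
     right_inv := by rintro (_ | w | w) <;> rfl },
   by
    rintro (_ | w | w)
    · simp [parent_root]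
    · rcases hw : parent w with _ | p
      · rw [parent_left_none hw]
        show parent (Vtx.right w) = _
        rw [parent_right_none hw]; rfl
      · rw [parent_left_some hw]
        show parent (Vtx.right w) = _
        rw [parent_right_some hw]; rfl
    · rcases hw : parent w with _ | p
      · rw [parent_right_none hw]
        show parent (Vtx.left w) = _
        rw [parent_left_none hw]; rfl
      · rw [parent_right_some hw]
        show parent (Vtx.left w) = _
        rw [parent_left_some hw]; rfl⟩

lemma topSwap_left {a b : PBT} (w : Vtx a) :
    (topSwap a b).1 (Vtx.left w) = Vtx.right w := rfl
lemma topSwap_right {a b : PBT} (w : Vtx b) :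
    (topSwap a b).1 (Vtx.right w) = Vtx.left w := rfl

lemma maps_left {a b a' b' : PBT} (e : IsoT (.node a b) (.node a' b'))
    (h : e.1 (Vtx.left (.root a)) = Vtx.left (.root a')) :
    ∀ w : Vtx a, ∃ w', e.1 (Vtx.left w) = Vtx.left w' := by
  suffices H : ∀ n (w : Vtx a), depth w = n → ∃ w', e.1 (Vtx.left w) = Vtx.left w' from
    fun w => H _ w rfl
  intro n
  induction n using Nat.strong_induction_on with
  | _ n ih =>
    intro w hw
    by_cases hr : w = .root a
    · exact ⟨_, by rw [hr, h]⟩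
    · obtain ⟨u, hu⟩ := exists_parent hr
      have hd : depth u < n := by
        have := depth_parent w u hu; omega
      obtain ⟨u', hu'⟩ := ih (depth u) hd u rfl
      have h1 : parent (e.1 (Vtx.left w)) = some (Vtx.left u') := by
        rw [e.2, parent_left_some hu, Option.map_some, hu']
      obtain ⟨w', hw', -⟩ := parent_inv_left h1
      exact ⟨w', hw'⟩

/-- extraction of a sub-isomorphism on left subtrees -/
lemma subIso_LL {a b a' b' : PBT} (e : IsoT (.node a b) (.node a' b'))
    (h : e.1 (Vtx.left (.root a)) = Vtx.left (.root a')) :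
    ∃ e₁ : IsoT a a', ∀ w, e.1 (Vtx.left w) = Vtx.left (e₁.1 w) := by
  have hsymm : e.symm.1 (Vtx.left (.root a')) = Vtx.left (.root a) := by
    show e.1.symm _ = _
    rw [← h, Equiv.symm_apply_apply]
  choose f hf using maps_left e h
  choose g hg using maps_left e.symm hsymm
  have hgf : ∀ w, g (f w) = w := by
    intro w
    have : (Vtx.left (g (f w)) : Vtx (.node a b)) = Vtx.left w := by
      rw [← hg (f w), ← hf w]
      show e.1.symm _ = _
      rw [Equiv.symm_apply_apply]
    injection this
  have hfg : ∀ w, f (g w) = w := by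
    intro w
    have : (Vtx.left (f (g w)) : Vtx (.node a' b')) = Vtx.left w := by
      rw [← hf (g w), ← hg w]
      show e.1 (e.1.symm _) = _
      rw [Equiv.apply_symm_apply]
    injection this
  refine ⟨⟨⟨f, g, hgf, hfg⟩, ?_⟩, hf⟩
  intro w
  rcases hp : parent w with _ | u
  · rw [parent_eq_none.mp hp] at *
    have : f (Vtx.root a) = Vtx.root a' := by
      have := hf (Vtx.root a)
      rw [h] at this
      exact (by injection this : Vtx.root a' = f (Vtx.root a)).symm
    show parent (f (Vtx.root a)) = none
    rw [this, parent_root]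
  · have h1 : parent (e.1 (Vtx.left w)) = some (Vtx.left (f u)) := by
      rw [e.2, parent_left_some hp, Option.map_some, hf u]
    rw [hf w] at h1
    obtain ⟨w'', hw'', hpw⟩ := parent_inv_left h1
    obtain rfl : f w = w'' := by injection hw''
    show parent (f w) = some (f u)
    rw [hpw]

lemma topSwap_eq_left {a b : PBT} {x : Vtx (.node a b)} {y : Vtx b}
    (h : (topSwap a b).1 x = Vtx.left y) : x = Vtx.right y := by
  cases x with
  | root => exact absurd h (by simp [topSwap])
  | left w => exact absurd h (by simp [topSwap])
  | right w => rw [topSwap_right] at h; injection h with h1 h2 h3; rw [h3]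

lemma topSwap_eq_right {a b : PBT} {x : Vtx (.node a b)} {y : Vtx a}
    (h : (topSwap a b).1 x = Vtx.right y) : x = Vtx.left y := by
  cases x with
  | root => exact absurd h (by simp [topSwap])
  | right w => exact absurd h (by simp [topSwap])
  | left w => rw [topSwap_left] at h; injection h with h1 h2 h3; rw [h3]

lemma subIso_RR {a b a' b' : PBT} (e : IsoT (.node a b) (.node a' b'))
    (h : e.1 (Vtx.right (.root b)) = Vtx.right (.root b')) :
    ∃ e₂ : IsoT b b', ∀ w, e.1 (Vtx.right w) = Vtx.right (e₂.1 w) := by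
  set M := (topSwap b a).trans (e.trans (topSwap a' b')) with hM
  have happ : ∀ w : Vtx b, M.1 (Vtx.left w) = (topSwap a' b').1 (e.1 (Vtx.right w)) := by
    intro w; rfl
  have h0 : M.1 (Vtx.left (.root b)) = Vtx.left (.root b') := by
    rw [happ, h, topSwap_right]
  obtain ⟨e₂, he₂⟩ := subIso_LL M h0
  refine ⟨e₂, fun w => ?_⟩
  exact topSwap_eq_left (by rw [← happ, he₂])

lemma subIso_LR {a b a' b' : PBT} (e : IsoT (.node a b) (.node a' b'))
    (h : e.1 (Vtx.left (.root a)) = Vtx.right (.root b')) :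
    ∃ e₁ : IsoT a b', ∀ w, e.1 (Vtx.left w) = Vtx.right (e₁.1 w) := by
  set N := e.trans (topSwap a' b') with hN
  have happ : ∀ w : Vtx a, N.1 (Vtx.left w) = (topSwap a' b').1 (e.1 (Vtx.left w)) := by
    intro w; rfl
  have h0 : N.1 (Vtx.left (.root a)) = Vtx.left (.root b') := by
    rw [happ, h, topSwap_right]
  obtain ⟨e₁, he₁⟩ := subIso_LL N h0
  refine ⟨e₁, fun w => ?_⟩
  exact topSwap_eq_left (by rw [← happ, he₁])

lemma subIso_RL {a b a' b' : PBT} (e : IsoT (.node a b) (.node a' b'))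
    (h : e.1 (Vtx.right (.root b)) = Vtx.left (.root a')) :
    ∃ e₂ : IsoT b a', ∀ w, e.1 (Vtx.right w) = Vtx.left (e₂.1 w) := by
  set N := e.trans (topSwap a' b') with hN
  have happ : ∀ w : Vtx b, N.1 (Vtx.right w) = (topSwap a' b').1 (e.1 (Vtx.right w)) := by
    intro w; rfl
  have h0 : N.1 (Vtx.right (.root b)) = Vtx.right (.root a') := by
    rw [happ, h, topSwap_left]
  obtain ⟨e₂, he₂⟩ := subIso_RR N h0
  refine ⟨e₂, fun w => ?_⟩
  exact topSwap_eq_right (by rw [← happ, he₂])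

def glue {a b a' b' : PBT} (e₁ : IsoT a a') (e₂ : IsoT b b') :
    IsoT (.node a b) (.node a' b') :=
  ⟨{ toFun := fun v => match v with
      | .root _ => .root _
      | .left w => .left (e₁.1 w)
      | .right w => .right (e₂.1 w)
     invFun := fun v => match v with
      | .root _ => .root _
      | .left w => .left (e₁.1.symm w)
      | .right w => .right (e₂.1.symm w)
     left_inv := by rintro (_ | w | w) <;> simp
     right_inv := by rintro (_ | w | w) <;> simp },
   by
    rintro (_ | w | w)
    · rw [parent_root]; rfl
    · rcases hp : parent w with _ | u
      · have h1 := e₁.2 w; rw [hp] at h1; simp only [Option.map_none] at h1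
        show parent (Vtx.left (e₁.1 w)) = _
        rw [parent_left_none h1, parent_left_none hp]; rfl
      · have h1 := e₁.2 w; rw [hp] at h1; simp only [Option.map_some] at h1
        show parent (Vtx.left (e₁.1 w)) = _
        rw [parent_left_some h1, parent_left_some hp]; rfl
    · rcases hp : parent w with _ | u
      · have h1 := e₂.2 w; rw [hp] at h1; simp only [Option.map_none] at h1
        show parent (Vtx.right (e₂.1 w)) = _
        rw [parent_right_none h1, parent_right_none hp]; rfl
      · have h1 := e₂.2 w; rw [hp] at h1; simp only [Option.map_some] at h1
        show parent (Vtx.right (e₂.1 w)) = _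
        rw [parent_right_some h1, parent_right_some hp]; rfl⟩

def glueX {a b a' b' : PBT} (e₁ : IsoT a b') (e₂ : IsoT b a') :
    IsoT (.node a b) (.node a' b') :=
  (glue e₁ e₂).trans (topSwap b' a')

lemma glue_root {a b a' b' : PBT} (e₁ : IsoT a a') (e₂ : IsoT b b') :
    (glue e₁ e₂).1 (.root _) = .root _ := rfl
lemma glue_left {a b a' b' : PBT} (e₁ : IsoT a a') (e₂ : IsoT b b') (w : Vtx a) :
    (glue e₁ e₂).1 (Vtx.left w) = Vtx.left (e₁.1 w) := rfl
lemma glue_right {a b a' b' : PBT} (e₁ : IsoT a a') (e₂ : IsoT b b') (w : Vtx b) :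
    (glue e₁ e₂).1 (Vtx.right w) = Vtx.right (e₂.1 w) := rfl
lemma glueX_root {a b a' b' : PBT} (e₁ : IsoT a b') (e₂ : IsoT b a') :
    (glueX e₁ e₂).1 (.root _) = .root _ := rfl
lemma glueX_left {a b a' b' : PBT} (e₁ : IsoT a b') (e₂ : IsoT b a') (w : Vtx a) :
    (glueX e₁ e₂).1 (Vtx.left w) = Vtx.right (e₁.1 w) := rfl
lemma glueX_right {a b a' b' : PBT} (e₁ : IsoT a b') (e₂ : IsoT b a') (w : Vtx b) :
    (glueX e₁ e₂).1 (Vtx.right w) = Vtx.left (e₂.1 w) := rfl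

lemma exists_split {a b a' b' : PBT} (e : IsoT (.node a b) (.node a' b')) :
    (∃ (e₁ : IsoT a a') (e₂ : IsoT b b'), ∀ v, e.1 v = (glue e₁ e₂).1 v) ∨
    (∃ (e₁ : IsoT a b') (e₂ : IsoT b a'), ∀ v, e.1 v = (glueX e₁ e₂).1 v) := by
  have hcl : parent (e.1 (Vtx.left (.root a))) = some (.root _) := by
    rw [e.2, parent_left_none parent_root, Option.map_some, root_fix]
  have hcr : parent (e.1 (Vtx.right (.root b))) = some (.root _) := by
    rw [e.2, parent_right_none parent_root, Option.map_some, root_fix]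
  rcases parent_inv_root hcl with h | h
  · rcases parent_inv_root hcr with h2 | h2
    · exfalso
      have := e.1.injective (h.trans h2.symm)
      exact absurd this (by simp)
    · obtain ⟨e₁, he₁⟩ := subIso_LL e h
      obtain ⟨e₂, he₂⟩ := subIso_RR e h2
      refine Or.inl ⟨e₁, e₂, fun v => ?_⟩
      cases v with
      | root => rw [root_fix, glue_root]
      | left w => rw [he₁, glue_left]
      | right w => rw [he₂, glue_right]
  · rcases parent_inv_root hcr with h2 | h2
    · obtain ⟨e₁, he₁⟩ := subIso_LR e h
      obtain ⟨e₂, he₂⟩ := subIso_RL e h2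
      refine Or.inr ⟨e₁, e₂, fun v => ?_⟩
      cases v with
      | root => rw [root_fix, glueX_root]
      | left w => rw [he₁, glueX_left]
      | right w => rw [he₂, glueX_right]
    · exfalso
      have := e.1.injective (h.trans h2.symm)
      exact absurd this (by simp)


lemma IsoT.ext {a b : PBT} {e f : IsoT a b} (h : ∀ v, e.1 v = f.1 v) : e = f :=
  Subtype.ext (Equiv.ext h)

lemma glue_cancel {a b a' b' : PBT} {e₁ f₁ : IsoT a a'} {e₂ f₂ : IsoT b b'}
    (h : ∀ v, (glue e₁ e₂).1 v = (glue f₁ f₂).1 v) : e₁ = f₁ ∧ e₂ = f₂ := by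
  constructor
  · apply IsoT.ext; intro w
    have := h (.left w); rw [glue_left, glue_left] at this
    injection this with h1 h2 h3
  · apply IsoT.ext; intro w
    have := h (.right w); rw [glue_right, glue_right] at this
    injection this with h1 h2 h3

lemma glueX_cancel {a b a' b' : PBT} {e₁ f₁ : IsoT a b'} {e₂ f₂ : IsoT b a'}
    (h : ∀ v, (glueX e₁ e₂).1 v = (glueX f₁ f₂).1 v) : e₁ = f₁ ∧ e₂ = f₂ := by
  constructor
  · apply IsoT.ext; intro w
    have := h (.left w); rw [glueX_left, glueX_left] at this
    injection this with h1 h2 h3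
  · apply IsoT.ext; intro w
    have := h (.right w); rw [glueX_right, glueX_right] at this
    injection this with h1 h2 h3

lemma glue_ne_glueX {a b a' b' : PBT} (e₁ : IsoT a a') (e₂ : IsoT b b')
    (f₁ : IsoT a b') (f₂ : IsoT b a') :
    ¬ ∀ v, (glue e₁ e₂).1 v = (glueX f₁ f₂).1 v := by
  intro h
  have := h (.left (.root a))
  rw [glue_left, glueX_left] at this
  exact absurd this (by simp)

open Classical in
noncomputable def splitEquiv (a b a' b' : PBT) :
    IsoT (.node a b) (.node a' b') ≃ (IsoT a a' × IsoT b b') ⊕ (IsoT a b' × IsoT b a') where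
  toFun e :=
    if h : ∃ (e₁ : IsoT a a') (e₂ : IsoT b b'), ∀ v, e.1 v = (glue e₁ e₂).1 v then
      .inl ⟨h.choose, h.choose_spec.choose⟩
    else
      .inr ⟨((exists_split e).resolve_left h).choose,
            ((exists_split e).resolve_left h).choose_spec.choose⟩
  invFun := Sum.elim (fun p => glue p.1 p.2) (fun p => glueX p.1 p.2)
  left_inv e := by
    by_cases h : ∃ (e₁ : IsoT a a') (e₂ : IsoT b b'), ∀ v, e.1 v = (glue e₁ e₂).1 v
    · simp only [dif_pos h, Sum.elim_inl]
      exact (IsoT.ext h.choose_spec.choose_spec).symm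
    · simp only [dif_neg h, Sum.elim_inr]
      exact (IsoT.ext ((exists_split e).resolve_left h).choose_spec.choose_spec).symm
  right_inv p := by
    rcases p with ⟨e₁, e₂⟩ | ⟨e₁, e₂⟩
    · have h : ∃ (f₁ : IsoT a a') (f₂ : IsoT b b'),
          ∀ v, (glue e₁ e₂).1 v = (glue f₁ f₂).1 v := ⟨e₁, e₂, fun _ => rfl⟩
      simp only [Sum.elim_inl, dif_pos h]
      refine (dif_pos h).trans ?_
      obtain ⟨h1, h2⟩ := glue_cancel h.choose_spec.choose_spec
      exact congrArg Sum.inl (by rw [Prod.mk.injEq]; exact ⟨h1.symm, h2.symm⟩)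
    · have h : ¬ ∃ (f₁ : IsoT a a') (f₂ : IsoT b b'),
          ∀ v, (glueX e₁ e₂).1 v = (glue f₁ f₂).1 v := by
        rintro ⟨f₁, f₂, hf⟩
        exact glue_ne_glueX f₁ f₂ e₁ e₂ (fun v => (hf v).symm)
      simp only [Sum.elim_inr, dif_neg h]
      refine (dif_neg h).trans ?_
      have hspec := ((exists_split (glueX e₁ e₂)).resolve_left h).choose_spec.choose_spec
      obtain ⟨h1, h2⟩ := glueX_cancel hspec
      exact congrArg Sum.inr (by rw [Prod.mk.injEq]; exact ⟨h1.symm, h2.symm⟩)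

-- finiteness of vertex types
instance : Unique (Vtx .leaf) :=
  ⟨⟨.root _⟩, fun v => by cases v; rfl⟩

def vtxEquiv (a b : PBT) : Vtx (.node a b) ≃ (Unit ⊕ Vtx a ⊕ Vtx b) where
  toFun v := match v with
    | .root _ => .inl ()
    | .left w => .inr (.inl w)
    | .right w => .inr (.inr w)
  invFun x := match x with
    | .inl _ => .root _
    | .inr (.inl w) => .left w
    | .inr (.inr w) => .right w
  left_inv := by rintro (_ | w | w) <;> rfl
  right_inv := by rintro (_ | w | w) <;> rfl

instance instFiniteVtx : ∀ T : PBT, Finite (Vtx T)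
  | .leaf => inferInstance
  | .node a b =>
      have := instFiniteVtx a
      have := instFiniteVtx b
      Finite.of_equiv _ (vtxEquiv a b).symm

instance (a b : PBT) : Finite (IsoT a b) := by
  unfold IsoT
  infer_instance

-- cardinalities
lemma card_isoT_eq {a b : PBT} (f₀ : IsoT a b) :
    Nat.card (IsoT a b) = Nat.card (IsoT a a) := by
  refine (Nat.card_congr ?_).symm
  refine ⟨fun e => e.trans f₀, fun g => g.trans f₀.symm, fun e => ?_, fun g => ?_⟩
  · apply IsoT.ext; intro v
    show f₀.1.symm (f₀.1 (e.1 v)) = e.1 v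
    rw [Equiv.symm_apply_apply]
  · apply IsoT.ext; intro v
    show f₀.1 (f₀.1.symm (g.1 v)) = g.1 v
    rw [Equiv.apply_symm_apply]

lemma card_isoT_zero {a b : PBT} (h : ¬ Iso a b) : Nat.card (IsoT a b) = 0 := by
  have : IsEmpty (IsoT a b) := not_nonempty_iff.mp h
  exact Nat.card_of_isEmpty

lemma card_aut_node (a b : PBT) :
    Nat.card (IsoT (.node a b) (.node a b)) =
      Nat.card (IsoT a a) * Nat.card (IsoT b b) +
        Nat.card (IsoT a b) * Nat.card (IsoT b a) := by
  rw [Nat.card_congr (splitEquiv a b a b), Nat.card_sum, Nat.card_prod, Nat.card_prod]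

lemma card_isoT_pos (a : PBT) : 0 < Nat.card (IsoT a a) := by
  haveI : Nonempty (IsoT a a) := ⟨IsoT.refl a⟩
  exact Nat.card_pos


lemma iso_def {a b : PBT} : Iso a b ↔ Nonempty (IsoT a b) := Iff.rfl

lemma iso_refl (a : PBT) : Iso a a := ⟨IsoT.refl a⟩
lemma iso_symm {a b : PBT} (h : Iso a b) : Iso b a := h.elim fun e => ⟨IsoT.symm e⟩
lemma iso_trans {a b c : PBT} (h : Iso a b) (h' : Iso b c) : Iso a c :=
  h.elim fun e => h'.elim fun f => ⟨IsoT.trans e f⟩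

/-- number of vertices -/
noncomputable def nv (T : PBT) : ℕ := Nat.card (Vtx T)

lemma nv_leaf : nv .leaf = 1 := Nat.card_unique

lemma nv_node (a b : PBT) : nv (.node a b) = 1 + (nv a + nv b) := by
  rw [nv, Nat.card_congr (vtxEquiv a b), Nat.card_sum, Nat.card_sum, Nat.card_unique]; rfl

lemma nv_pos (T : PBT) : 0 < nv T := by
  haveI : Nonempty (Vtx T) := ⟨.root T⟩
  exact Nat.card_pos

lemma nv_eq_of_iso {a b : PBT} (h : Iso a b) : nv a = nv b :=
  h.elim fun e => Nat.card_congr e.1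

lemma finite_nv_le : ∀ n : ℕ, {S : PBT | nv S ≤ n}.Finite := by
  intro n
  induction n with
  | zero =>
    refine Set.Finite.subset (Set.finite_empty) ?_
    intro S hS
    exact absurd (lt_of_lt_of_le (nv_pos S) hS) (by simp)
  | succ n ih =>
    refine Set.Finite.subset (Set.Finite.insert .leaf
      (Set.Finite.image (fun p : PBT × PBT => PBT.node p.1 p.2) (Set.Finite.prod ih ih))) ?_
    intro S hS
    cases S with
    | leaf => exact Set.mem_insert _ _
    | node a b =>
      refine Set.mem_insert_of_mem _ ⟨⟨a, b⟩, ⟨?_, ?_⟩, rfl⟩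
      · have := hS
        rw [Set.mem_setOf_eq, nv_node] at this
        have hb := nv_pos b
        simp only [Set.mem_setOf_eq]; omega
      · have := hS
        rw [Set.mem_setOf_eq, nv_node] at this
        have ha := nv_pos a
        simp only [Set.mem_setOf_eq]; omega

lemma isoClass_finite (T : PBT) : {S : PBT | Iso S T}.Finite :=
  Set.Finite.subset (finite_nv_le (nv T)) (fun S hS => (nv_eq_of_iso hS).le)

lemma iso_leaf {S : PBT} : Iso S .leaf ↔ S = .leaf := by
  constructor
  · intro h
    cases S with
    | leaf => rfl
    | node a b =>
      have := nv_eq_of_iso h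
      rw [nv_node, nv_leaf] at this
      have := nv_pos a; have := nv_pos b
      omega
  · rintro rfl; exact iso_refl _

lemma iso_node {S a b : PBT} :
    Iso S (.node a b) ↔ ∃ s t, S = .node s t ∧
      ((Iso s a ∧ Iso t b) ∨ (Iso s b ∧ Iso t a)) := by
  constructor
  · intro h
    cases S with
    | leaf =>
      exfalso
      have := nv_eq_of_iso h
      rw [nv_node, nv_leaf] at this
      have := nv_pos a; have := nv_pos b
      omega
    | node s t =>
      obtain ⟨e⟩ := h
      rcases exists_split e with ⟨e₁, e₂, -⟩ | ⟨e₁, e₂, -⟩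
      · exact ⟨s, t, rfl, Or.inl ⟨⟨e₁⟩, ⟨e₂⟩⟩⟩
      · exact ⟨s, t, rfl, Or.inr ⟨⟨e₁⟩, ⟨e₂⟩⟩⟩
  · rintro ⟨s, t, rfl, ⟨⟨e₁⟩, ⟨e₂⟩⟩ | ⟨⟨e₁⟩, ⟨e₂⟩⟩⟩
    · exact ⟨glue e₁ e₂⟩
    · exact ⟨glueX e₁ e₂⟩

lemma isoClass_node (a b : PBT) :
    {S : PBT | Iso S (.node a b)} =
      (fun p : PBT × PBT => PBT.node p.1 p.2) ''
        ({s | Iso s a} ×ˢ {t | Iso t b} ∪ {s | Iso s b} ×ˢ {t | Iso t a}) := by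
  ext S
  simp only [Set.mem_setOf_eq, Set.mem_image, Set.mem_union, Set.mem_prod, iso_node]
  constructor
  · rintro ⟨s, t, rfl, h⟩
    exact ⟨⟨s, t⟩, by tauto, rfl⟩
  · rintro ⟨⟨s, t⟩, h, rfl⟩
    exact ⟨s, t, rfl, by tauto⟩

-- ALGEBRA PART
noncomputable def gg (S : PBT) : ModuleCat.of K V ⟶ ModuleCat.of K (TensorAlgebra K W) :=
  Pm K V W φ ψ S ≫ flat K W S

noncomputable def PhiH (f g : ModuleCat.of K V ⟶ ModuleCat.of K (TensorAlgebra K W)) :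
    ModuleCat.of K V ⟶ ModuleCat.of K (TensorAlgebra K W) :=
  ModuleCat.ofHom φ ≫ (f ⊗ₘ g) ≫ ModuleCat.ofHom (LinearMap.mul' K (TensorAlgebra K W))

lemma gg_node (s t : PBT) :
    gg K V W φ ψ (.node s t) = PhiH K V W φ (gg K V W φ ψ s) (gg K V W φ ψ t) := by
  simp only [gg, PhiH, Pm, flat, Category.assoc, ← tensorHom_comp_tensorHom]
  exact Category.assoc _ _ _

lemma Pm_Qm_node (a b : PBT) :
    Pm K V W φ ψ (.node a b) ≫ Qm K W (.node a b) =
      ModuleCat.ofHom φ ≫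
        ((Pm K V W φ ψ a ≫ Qm K W a) ⊗ₘ (Pm K V W φ ψ b ≫ Qm K W b)) ≫
          ModuleCat.ofHom (brkt K W) := by
  simp only [Pm, Qm, Category.assoc, ← tensorHom_comp_tensorHom]
  exact Category.assoc _ _ _

lemma brkt_key
    (hφ : ∀ v : V, φ v ∈ Submodule.span K
      {z : V ⊗[K] V | ∃ a b : V, z = a ⊗ₜ[K] b - b ⊗ₜ[K] a})
    (f g : ModuleCat.of K V ⟶ ModuleCat.of K (TensorAlgebra K W)) :
    ModuleCat.ofHom φ ≫ (f ⊗ₘ g) ≫ ModuleCat.ofHom (brkt K W) =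
      PhiH K V W φ f g + PhiH K V W φ g f := by
  refine ModuleCat.hom_ext (LinearMap.ext (fun v => ?_))
  show brkt K W (TensorProduct.map f.hom g.hom (φ v)) =
    LinearMap.mul' K (TensorAlgebra K W) (TensorProduct.map f.hom g.hom (φ v)) +
      LinearMap.mul' K (TensorAlgebra K W) (TensorProduct.map g.hom f.hom (φ v))
  have main : ∀ z ∈ Submodule.span K
      {z : V ⊗[K] V | ∃ a b : V, z = a ⊗ₜ[K] b - b ⊗ₜ[K] a},
      brkt K W (TensorProduct.map f.hom g.hom z) =
        LinearMap.mul' K (TensorAlgebra K W) (TensorProduct.map f.hom g.hom z) +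
          LinearMap.mul' K (TensorAlgebra K W) (TensorProduct.map g.hom f.hom z) := by
    intro z hz
    induction hz using Submodule.span_induction with
    | mem z hz =>
      obtain ⟨x, y, rfl⟩ := hz
      simp only [brkt, LinearMap.coe_comp, Function.comp_apply, LinearMap.sub_apply,
        LinearMap.id_apply, LinearEquiv.coe_coe, map_sub, TensorProduct.map_tmul,
        TensorProduct.comm_tmul, LinearMap.mul'_apply]
      abel
    | zero => simp
    | add x y hx hy ihx ihy => simp only [map_add, ihx, ihy]; abel
    | smul c x hx ihx => simp only [map_smul, ihx, smul_add]
  exact main _ (hφ v)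

lemma smul_tensorHom {M N P Q : ModuleCat K} (c : K) (f : M ⟶ N) (g : P ⟶ Q) :
    (c • f) ⊗ₘ g = c • (f ⊗ₘ g) := by
  rw [MonoidalCategory.tensorHom_def, MonoidalLinear.smul_whiskerRight, Linear.smul_comp, ← MonoidalCategory.tensorHom_def]

lemma tensorHom_smul {M N P Q : ModuleCat K} (c : K) (f : M ⟶ N) (g : P ⟶ Q) :
    f ⊗ₘ (c • g) = c • (f ⊗ₘ g) := by
  rw [MonoidalCategory.tensorHom_def, MonoidalLinear.whiskerLeft_smul, Linear.comp_smul, ← MonoidalCategory.tensorHom_def]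

lemma PhiH_sum_left {ι : Type} (s : Finset ι)
    (f : ι → (ModuleCat.of K V ⟶ ModuleCat.of K (TensorAlgebra K W))) (g) :
    PhiH K V W φ (∑ i ∈ s, f i) g = ∑ i ∈ s, PhiH K V W φ (f i) g := by
  simp only [PhiH, sum_tensor, Preadditive.sum_comp, Preadditive.comp_sum]

lemma PhiH_sum_right {ι : Type} (s : Finset ι)
    (f : ι → (ModuleCat.of K V ⟶ ModuleCat.of K (TensorAlgebra K W))) (g) :
    PhiH K V W φ g (∑ i ∈ s, f i) = ∑ i ∈ s, PhiH K V W φ g (f i) := by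
  simp only [PhiH, tensor_sum, Preadditive.sum_comp, Preadditive.comp_sum]

lemma aut_card (T : PBT) : Nat.card (Aut T) = Nat.card (IsoT T T) := rfl

set_option maxHeartbeats 1000000 in
lemma master
    (hphi : ∀ v : V, φ v ∈ Submodule.span K
      {z : V ⊗[K] V | ∃ a b : V, z = a ⊗ₜ[K] b - b ⊗ₜ[K] a}) :
    ∀ T : PBT,
      Pm K V W φ ψ T ≫ Qm K W T =
        (Nat.card (Aut T) : K) • ∑ᶠ S ∈ {S : PBT | Iso S T}, gg K V W φ ψ S := by
  intro T
  induction T with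
  | leaf =>
    have hset : {S : PBT | Iso S .leaf} = {PBT.leaf} := by
      ext S; simp [Set.mem_setOf_eq, iso_leaf]
    have hcard : Nat.card (Aut PBT.leaf) = 1 := by
      rw [aut_card]
      haveI : Subsingleton (IsoT .leaf .leaf) :=
        ⟨fun e f => IsoT.ext (fun v => Subsingleton.elim _ _)⟩
      haveI : Nonempty (IsoT .leaf .leaf) := ⟨IsoT.refl _⟩
      exact Nat.card_eq_one_iff_unique.mpr ⟨‹_›, ‹_›⟩
    rw [hset, finsum_mem_singleton, hcard, Nat.cast_one, one_smul]
    rfl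
  | node a b iha ihb =>
    classical
    have hAf : {S : PBT | Iso S a}.Finite := isoClass_finite a
    have hBf : {S : PBT | Iso S b}.Finite := isoClass_finite b
    have hL : Pm K V W φ ψ (.node a b) ≫ Qm K W (.node a b)
        = ((Nat.card (Aut a) : K) * (Nat.card (Aut b) : K)) •
            (PhiH K V W φ (∑ᶠ S ∈ {S : PBT | Iso S a}, gg K V W φ ψ S)
                (∑ᶠ S ∈ {S : PBT | Iso S b}, gg K V W φ ψ S) +
              PhiH K V W φ (∑ᶠ S ∈ {S : PBT | Iso S b}, gg K V W φ ψ S)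
                (∑ᶠ S ∈ {S : PBT | Iso S a}, gg K V W φ ψ S)) := by
      rw [Pm_Qm_node, iha, ihb]
      rw [smul_tensorHom, tensorHom_smul, smul_smul, Linear.smul_comp, Linear.comp_smul,
        brkt_key K V W φ hphi]
    have hinj : Set.InjOn (fun p : PBT × PBT => PBT.node p.1 p.2)
        (({S : PBT | Iso S a} ×ˢ {S : PBT | Iso S b}) ∪
          ({S : PBT | Iso S b} ×ˢ {S : PBT | Iso S a})) := by
      rintro ⟨p1, p2⟩ - ⟨q1, q2⟩ - h
      simp only at h
      obtain ⟨h1, h2⟩ := PBT.node.inj h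
      simp [h1, h2, Prod.ext_iff]
    have himg : (∑ᶠ S ∈ {S : PBT | Iso S (.node a b)}, gg K V W φ ψ S)
        = ∑ᶠ p ∈ (({S : PBT | Iso S a} ×ˢ {S : PBT | Iso S b}) ∪
            ({S : PBT | Iso S b} ×ˢ {S : PBT | Iso S a})),
            PhiH K V W φ (gg K V W φ ψ p.1) (gg K V W φ ψ p.2) := by
      rw [isoClass_node, finsum_mem_image hinj]
      exact finsum_mem_congr rfl (fun p _ => gg_node K V W φ ψ p.1 p.2)
    have hprod : ∀ (s t : Set PBT), s.Finite → t.Finite →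
        (∑ᶠ p ∈ s ×ˢ t, PhiH K V W φ (gg K V W φ ψ p.1) (gg K V W φ ψ p.2))
          = PhiH K V W φ (∑ᶠ S ∈ s, gg K V W φ ψ S) (∑ᶠ S ∈ t, gg K V W φ ψ S) := by
      intro s t hs ht
      have h1 : s ×ˢ t = ↑(hs.toFinset ×ˢ ht.toFinset) := by simp
      rw [h1, finsum_mem_coe_finset, finsum_mem_eq_finite_toFinset_sum _ hs,
        finsum_mem_eq_finite_toFinset_sum _ ht, Finset.sum_product, PhiH_sum_left]
      refine Finset.sum_congr rfl (fun i _ => ?_)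
      rw [PhiH_sum_right]
    by_cases hiso : Iso a b
    · have hAB : {S : PBT | Iso S a} = {S : PBT | Iso S b} := by
        ext S
        exact ⟨fun h => iso_trans h hiso, fun h => iso_trans h (iso_symm hiso)⟩
      obtain ⟨f0⟩ := hiso
      have hc : Nat.card (Aut (PBT.node a b)) = 2 * (Nat.card (Aut a) * Nat.card (Aut b)) := by
        rw [aut_card, card_aut_node, aut_card, aut_card,
          card_isoT_eq f0, card_isoT_eq (IsoT.symm f0)]
        ring
      rw [← hAB] at hL himg
      rw [Set.union_self] at himg
      rw [himg, hprod _ _ hAf hAf, hL, hc]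
      push_cast
      module
    · have hdisj : Disjoint ({S : PBT | Iso S a} ×ˢ {S : PBT | Iso S b})
          (({S : PBT | Iso S b} ×ˢ {S : PBT | Iso S a})) := by
        rw [Set.disjoint_left]
        rintro ⟨s, t⟩ ⟨h1, h2⟩ ⟨h3, h4⟩
        exact hiso (iso_trans (iso_symm h1) h3)
      have hc : Nat.card (Aut (PBT.node a b)) = Nat.card (Aut a) * Nat.card (Aut b) := by
        rw [aut_card, card_aut_node, aut_card, aut_card, card_isoT_zero hiso,
          card_isoT_zero (fun h => hiso (iso_symm h)), zero_mul, add_zero]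
      rw [himg, finsum_mem_union hdisj (hAf.prod hBf) (hBf.prod hAf),
        hprod _ _ hAf hBf, hprod _ _ hBf hAf, hL, hc, Nat.cast_mul]


end Stmt1

/-- Theorem `Liepolynomial`: if the image of φ : V → V⊗V consists of
Lie polynomials, ψ : V → W is linear, and T is a planar rooted binary tree with
k ≥ 2 leaves, then (1/|Aut T|)·Q_T ∘ P_T = Σ_{S ∈ T̄} P_S, where T̄ is the set of
planar trees isomorphic to T as non-planar rooted trees and both sides are
compared inside the tensor algebra T(W). -/
theorem stmt_1 (K V W : Type) [Field K] [CharZero K]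
    [AddCommGroup V] [Module K V] [AddCommGroup W] [Module K W]
    (φ : V →ₗ[K] V ⊗[K] V) (ψ : V →ₗ[K] W)
    (hφ : ∀ v : V, φ v ∈ Submodule.span K
      {z : V ⊗[K] V | ∃ a b : V, z = a ⊗ₜ[K] b - b ⊗ₜ[K] a})
    (T : Stmt1.PBT) (hT : T ≠ Stmt1.PBT.leaf) :
    ((Nat.card (Stmt1.Aut T) : K)⁻¹) • (Stmt1.Pm K V W φ ψ T ≫ Stmt1.Qm K W T) =
      ∑ᶠ S ∈ {S : Stmt1.PBT | Stmt1.Iso S T},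
        (Stmt1.Pm K V W φ ψ S ≫ Stmt1.flat K W S) := by
  have hc : (Nat.card (Stmt1.Aut T) : K) ≠ 0 := by
    have hpos : 0 < Nat.card (Stmt1.Aut T) := by
      rw [Stmt1.aut_card]; exact Stmt1.card_isoT_pos T
    exact_mod_cast hpos.ne'
  rw [Stmt1.master K V W φ ψ hφ T, inv_smul_smul₀ hc]
  simp only [Stmt1.gg]
end

section
/- With p_n : 𝒜_n → C*(Δⁿ) defined by p_n(ω) = Σ_k Σ_{i₀<…<i_k} α_{i₀…i_k} ℐ_{i₀…i_k}(ω) and i_n : C*(Δⁿ) → 𝒜_n defined by i_n(α_{i₀…i_k}) = ω_{i₀…i_k}, one has p_n ∘ i_n = id on C*(Δⁿ), i.e., ℐ_{j₀…j_l}(ω_{i₀…i_k}) = 1 if (j₀,…,j_l) = (i₀,…,i_k) and 0 otherwise. -/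
namespace Stmt13

variable (K : Type) [Field K] [CharZero K]

/-- The elementary integration functional on polynomials on the l-simplex:
ℐ(t₁^{b₁}⋯t_l^{b_l} dt₁⋯dt_l) = b₁!⋯b_l!/(b₁+⋯+b_l+l)!, extended linearly
(here applied to the polynomial coefficient of the top form dt₁⋯dt_l). -/
noncomputable def I0 (l : ℕ) (p : MvPolynomial (Fin l) K) : K :=
  ∑ b ∈ p.support, p.coeff b *
    ((∏ s, ((Nat.factorial (b s) : ℕ) : K)) /
      ((Nat.factorial ((∑ s, b s) + l) : ℕ) : K))

/-- The coordinates t₀,…,t_l on the standard l-simplex, with t₀ = 1 - Σ tⱼ. -/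
noncomputable def tface (l : ℕ) : Fin (l + 1) → MvPolynomial (Fin l) K :=
  Fin.cons (1 - ∑ s, MvPolynomial.X s) (fun s => MvPolynomial.X s)

/-- The one-forms dt₀,…,dt_l, as coefficient vectors in the basis dt₁,…,dt_l
(dt₀ = -Σ dtⱼ). -/
noncomputable def dface (l : ℕ) : Fin (l + 1) → Fin l → MvPolynomial (Fin l) K :=
  Fin.cons (fun _ => -1) (fun j s => if s = j then 1 else 0)

/-- Pullback of the coordinate function t_v of Δⁿ along the face κ : Δˡ → Δⁿ. -/
noncomputable def tsub (l n : ℕ) (κ : Fin (l + 1) → Fin (n + 1))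
    (v : Fin (n + 1)) : MvPolynomial (Fin l) K :=
  ∑ j : Fin (l + 1), if κ j = v then tface K l j else 0

/-- Pullback of the one-form dt_v of Δⁿ along the face κ, as a coefficient
vector in the basis dt₁,…,dt_l of Δˡ. -/
noncomputable def dsub (l n : ℕ) (κ : Fin (l + 1) → Fin (n + 1))
    (v : Fin (n + 1)) : Fin l → MvPolynomial (Fin l) K :=
  ∑ j : Fin (l + 1), if κ j = v then dface K l j else 0

/-- ℐ_{κ₀…κ_l}(ω_{ι₀…ι_k}): the Whitney form
ω_ι = k! Σ_j (-1)^j t_{ι_j} dt_{ι₀}⋯\widehat{dt_{ι_j}}⋯dt_{ι_k} is pulled back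
along the face κ; its top coefficient (a determinant of the coefficient vectors
of the pulled-back one-forms) is integrated with I0. If k ≠ l the pairing is 0
for degree reasons. -/
noncomputable def pairing (l n k : ℕ) (κ : Fin (l + 1) → Fin (n + 1))
    (ι : Fin (k + 1) → Fin (n + 1)) : K :=
  if hkl : k = l then
    I0 K l ((Nat.factorial k : MvPolynomial (Fin l) K) *
      ∑ j : Fin (k + 1), (-1 : MvPolynomial (Fin l) K) ^ (j : ℕ) *
        tsub K l n κ (ι j) *
        (Matrix.of fun (m s : Fin l) =>
          dsub K l n κ (ι (j.succAbove (Fin.cast hkl.symm m))) s).det)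
  else 0

end Stmt13

namespace Stmt13Aux

open Stmt13

variable (K : Type) [Field K] [CharZero K]

omit [CharZero K] in
lemma sum_tface (l : ℕ) : ∑ i, tface K l i = 1 := by
  rw [Fin.sum_univ_succ]
  simp [tface]

omit [CharZero K] in
lemma sum_dface (l : ℕ) (s : Fin l) : ∑ i, dface K l i s = 0 := by
  rw [Fin.sum_univ_succ]
  simp [dface]

noncomputable def Nmat (l : ℕ) : Matrix (Fin (l + 1)) (Fin (l + 1)) (MvPolynomial (Fin l) K) :=
  Matrix.of fun j => Fin.cons (tface K l j) (dface K l j)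

omit [CharZero K] in
lemma det_Nmat (l : ℕ) : (Nmat K l).det = 1 := by
  have h := Matrix.det_updateRow_sum (Nmat K l) 0 (fun _ => 1)
  simp only [one_smul, smul_eq_mul, one_mul] at h
  rw [← h]
  have hrow : (∑ k : Fin (l+1), Nmat K l k) = Fin.cons 1 0 := by
    funext c
    refine (Finset.sum_apply c _ _).trans ?_
    refine Fin.cases ?_ (fun s => ?_) c
    · simpa [Nmat] using sum_tface K l
    · simpa [Nmat] using sum_dface K l s
  rw [hrow, Matrix.det_succ_row_zero]
  rw [Fin.sum_univ_succ]
  simp only [Matrix.updateRow_self, Fin.cons_zero, Fin.cons_succ, Pi.zero_apply, mul_zero,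
    zero_mul, mul_one, Finset.sum_const_zero, add_zero, pow_zero, one_mul]
  have : ((Matrix.updateRow (Nmat K l) 0 (Fin.cons 1 0)).submatrix Fin.succ
      ((0:Fin (l+1)).succAbove)) = 1 := by
    funext m s
    rw [Matrix.submatrix_apply, Matrix.updateRow_ne (Fin.succ_ne_zero m)]
    simp [Nmat, Fin.succAbove, dface, Matrix.one_apply, eq_comm]
  rw [this, Matrix.det_one]
  simp

omit [CharZero K] in
lemma tsub_self (l n : ℕ) (κ : Fin (l + 1) → Fin (n + 1)) (hκ : Function.Injective κ)
    (j : Fin (l + 1)) : tsub K l n κ (κ j) = tface K l j := by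
  rw [tsub, Finset.sum_eq_single j]
  · simp
  · intro j' _ hj'
    rw [if_neg (fun h => hj' (hκ h))]
  · simp

omit [CharZero K] in
lemma dsub_self (l n : ℕ) (κ : Fin (l + 1) → Fin (n + 1)) (hκ : Function.Injective κ)
    (j : Fin (l + 1)) : dsub K l n κ (κ j) = dface K l j := by
  rw [dsub, Finset.sum_eq_single j]
  · simp
  · intro j' _ hj'
    rw [if_neg (fun h => hj' (hκ h))]
  · simp

omit [CharZero K] in
lemma tsub_not_mem (l n : ℕ) (κ : Fin (l + 1) → Fin (n + 1)) (v : Fin (n + 1))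
    (hv : ∀ j, κ j ≠ v) : tsub K l n κ v = 0 := by
  rw [tsub]
  exact Finset.sum_eq_zero (fun j _ => if_neg (hv j))

omit [CharZero K] in
lemma dsub_not_mem (l n : ℕ) (κ : Fin (l + 1) → Fin (n + 1)) (v : Fin (n + 1))
    (hv : ∀ j, κ j ≠ v) : dsub K l n κ v = 0 := by
  rw [dsub]
  exact Finset.sum_eq_zero (fun j _ => if_neg (hv j))

omit [CharZero K] in
lemma I0_zero (l : ℕ) : I0 K l 0 = 0 := by
  simp [I0]

omit [CharZero K] in
lemma I0_C (l : ℕ) (c : K) : I0 K l (MvPolynomial.C c) = c / (Nat.factorial l : K) := by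
  classical
  by_cases hc : c = 0
  · simp [hc, I0_zero]
  · rw [I0, ← MvPolynomial.monomial_zero', MvPolynomial.support_monomial, if_neg hc]
    simp [MvPolynomial.coeff_monomial, div_eq_mul_inv]

end Stmt13Aux

/-- with pₙ(ω) = Σ α_{i₀…i_k} ℐ_{i₀…i_k}(ω) and
iₙ(α_{i₀…i_k}) = ω_{i₀…i_k}, one has pₙ ∘ iₙ = id, i.e.
ℐ_{j₀…j_l}(ω_{i₀…i_k}) = 1 if (j) = (i) and 0 otherwise. -/
theorem stmt_13 (K : Type) [Field K] [CharZero K] (n l k : ℕ)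
    (κ : Fin (l + 1) → Fin (n + 1)) (ι : Fin (k + 1) → Fin (n + 1))
    (hκ : StrictMono κ) (hι : StrictMono ι) :
    Stmt13.pairing K l n k κ ι =
      if h : k = l then
        (if (fun m => ι (Fin.cast (by omega) m)) = κ then 1 else 0)
      else 0 := by
  open Stmt13 Stmt13Aux in
  by_cases hkl : k = l
  · subst hkl
    rw [dif_pos rfl]
    rw [Stmt13.pairing, dif_pos rfl]
    have hcast : ∀ (h : k + 1 = k + 1) (m : Fin (k+1)), Fin.cast h m = m := fun _ _ => rfl
    have hcast' : ∀ (h : k = k) (m : Fin k), Fin.cast h m = m := fun _ _ => rfl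
    by_cases hκι : (fun m => ι (Fin.cast (by omega : k + 1 = k + 1) m)) = κ
    · rw [if_pos hκι]
      have hικ : ι = κ := by funext m; rw [← congrFun hκι m, hcast]
      subst hικ
      have hS : (∑ j : Fin (k + 1), (-1 : MvPolynomial (Fin k) K) ^ (j : ℕ) *
          Stmt13.tsub K k n ι (ι j) *
          (Matrix.of fun (m s : Fin k) =>
            Stmt13.dsub K k n ι (ι (j.succAbove (Fin.cast (rfl : k = k).symm m))) s).det)
          = (Nmat K k).det := by
        rw [Matrix.det_succ_column_zero]
        refine Finset.sum_congr rfl (fun j _ => ?_)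
        rw [tsub_self K k n ι hι.injective j]
        have h1 : (Nmat K k) j 0 = Stmt13.tface K k j := rfl
        have h2 : ((Nmat K k).submatrix j.succAbove Fin.succ) =
            Matrix.of fun (m s : Fin k) =>
              Stmt13.dsub K k n ι (ι (j.succAbove (Fin.cast (rfl : k = k).symm m))) s := by
          funext m s
          rw [Matrix.submatrix_apply]
          show Stmt13.dface K k (j.succAbove m) s = _
          simp only [Matrix.of_apply]
          rw [hcast' _ m, dsub_self K k n ι hι.injective]
        rw [h1, h2]
      rw [hS, det_Nmat, mul_one]
      have : ((Nat.factorial k : ℕ) : MvPolynomial (Fin k) K)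
          = MvPolynomial.C ((Nat.factorial k : ℕ) : K) := by
        simp
      rw [this, I0_C]
      exact div_self (Nat.cast_ne_zero.mpr (Nat.factorial_ne_zero k))
    · rw [if_neg hκι]
      have hικ : ι ≠ κ := fun h => hκι (by funext m; rw [hcast]; exact congrFun h m)
      -- there is a value of ι not in the range of κ
      have hex : ∃ m₀, ∀ j', κ j' ≠ ι m₀ := by
        by_contra hall
        push_neg at hall
        apply hικ
        have hr := (@StrictMono.range_inj (Fin (k+1)) (Fin (n+1)) _ _ Finite.to_wellFoundedLT _ _ hι hκ).mp
        apply hr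
        apply Set.eq_of_subset_of_ncard_le
        · rintro v ⟨m, rfl⟩
          obtain ⟨j', hj'⟩ := hall m
          exact ⟨j', hj'⟩
        · apply le_of_eq
          rw [← Set.image_univ, ← Set.image_univ,
            Set.ncard_image_of_injective _ hκ.injective,
            Set.ncard_image_of_injective _ hι.injective]
        · exact Set.finite_range κ
      obtain ⟨m₀, hm₀⟩ := hex
      have hS : (∑ j : Fin (k + 1), (-1 : MvPolynomial (Fin k) K) ^ (j : ℕ) *
          Stmt13.tsub K k n κ (ι j) *
          (Matrix.of fun (m s : Fin k) =>
            Stmt13.dsub K k n κ (ι (j.succAbove (Fin.cast (rfl : k = k).symm m))) s).det)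
          = 0 := by
        refine Finset.sum_eq_zero (fun j _ => ?_)
        by_cases hj : j = m₀
        · subst hj
          rw [tsub_not_mem K k n κ (ι j) (hm₀)]
          ring
        · obtain ⟨m, hm⟩ := Fin.exists_succAbove_eq (Ne.symm hj)
          have hdet : (Matrix.of fun (m s : Fin k) =>
              Stmt13.dsub K k n κ (ι (j.succAbove (Fin.cast (rfl : k = k).symm m))) s).det = 0 := by
            apply Matrix.det_eq_zero_of_row_eq_zero m
            intro s
            show Stmt13.dsub K k n κ (ι (j.succAbove (Fin.cast (rfl : k = k).symm m))) s = 0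
            rw [hcast', hm, dsub_not_mem K k n κ (ι m₀) hm₀]
            rfl
          rw [hdet]
          ring
      rw [hS, mul_zero, I0_zero]
  · rw [dif_neg hkl, Stmt13.pairing, dif_neg hkl]
end
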